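/- For every nonempty open subset U of M₃ × M₃ (subspace topology) and every index i ∈ Fin 4, there is no function h : ℝ³ → ℝ such that for all (p₁, p₂) ∈ U the i-th invariant equals h applied to the remaining three, i.e. such that ι_i(p₁,p₂) = h(ι_j(p₁,p₂), ι_k(p₁,p₂), ι_l(p₁,p₂)) for all (p₁,p₂) ∈ U, where {j,k,l} = Fin 4 \ {i}. That is, the collection (ι₁, ι₂, ι₃, ι₄) is everywhere independent on M₃ × M₃. -/

import Mathlib

open scoped RealInnerProductSpace

/-- Three-dimensional position-orientation space `M₃ = {(x, n) ∈ ℝ³ × ℝ³ | ‖n‖ = 1}`,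
topologized as a subspace of `ℝ³ × ℝ³`. -/
abbrev M3 : Type :=
  {p : EuclideanSpace ℝ (Fin 3) × EuclideanSpace ℝ (Fin 3) // ‖p.2‖ = 1}

/-- The collection of four invariants `(ι₁, ι₂, ι₃, ι₄) : M₃ × M₃ → ℝ⁴`. -/
noncomputable def iota (p : M3 × M3) : Fin 4 → ℝ :=
  ![⟪p.2.1.1 - p.1.1.1, p.1.1.2⟫, ⟪p.2.1.1 - p.1.1.1, p.2.1.2⟫,
    ⟪p.2.1.1 - p.1.1.1, p.2.1.1 - p.1.1.1⟫, ⟪p.1.1.2, p.2.1.2⟫]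

/-! At a configuration where `x₂ - x₁`, `n₁`, `n₂` are linearly independent (and these are dense
in `M₃ × M₃`) each invariant can be moved while the other three stay fixed. `ι₃` changes when
`x₂` is translated orthogonally to `n₁` and `n₂`; `ι₁`, `ι₂` and `ι₄` change when one orientation
is rotated about an axis (`n₂`, `n₁` and `x₂ - x₁` respectively), which preserves its norm and
its inner product with the axis. The moved invariant has nonzero derivative along the motion, so
arbitrarily close to the starting point there are configurations that agree on three invariants
and differ on the fourth. -/

open Filter Topology

theorem LinearIndependent.notMem_span_singleton_of_ne {ι R M : Type*} [Ring R] [Nontrivial R]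
    [AddCommGroup M] [Module R M] {v : ι → M} (hv : LinearIndependent R v) {i j : ι}
    (hji : j ≠ i) : v j ∉ R ∙ v i := by
  simpa [Set.image_singleton] using hv.notMem_span_image (s := {i}) hji

theorem LinearIndependent.notMem_span_pair_of_ne {ι R M : Type*} [Ring R] [Nontrivial R]
    [AddCommGroup M] [Module R M] {v : ι → M} (hv : LinearIndependent R v) {i j k : ι}
    (hki : k ≠ i) (hkj : k ≠ j) : v k ∉ Submodule.span R {v i, v j} := by
  simpa [Set.image_pair] using hv.notMem_span_image (s := {i, j}) (by simp [hki, hkj])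

section InnerProductSpace

variable {E : Type*} [NormedAddCommGroup E] [InnerProductSpace ℝ E]

theorem exists_mem_orthogonal_inner_ne {K : Submodule ℝ E} [K.HasOrthogonalProjection] {w : E}
    (hw : w ∉ K) : ∃ f ∈ Kᗮ, ⟪w, f⟫ ≠ 0 := by
  by_contra! h
  exact hw (K.orthogonal_orthogonal ▸ (Submodule.mem_orthogonal' _ _).2 h)

theorem exists_ne_zero_mem_orthogonal_of_finrank_lt [FiniteDimensional ℝ E] {K : Submodule ℝ E}
    (hK : Module.finrank ℝ K < Module.finrank ℝ E) : ∃ f ∈ Kᗮ, f ≠ 0 := by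
  refine Submodule.exists_mem_ne_zero_of_ne_bot fun h => hK.ne ?_
  rw [K.orthogonal_eq_bot_iff.1 h, finrank_top]

noncomputable def circleCurve (b e f : E) (t : ℝ) : E := b + Real.cos t • e + Real.sin t • f

@[fun_prop]
theorem continuous_circleCurve (b e f : E) : Continuous (circleCurve b e f) := by
  unfold circleCurve
  fun_prop

@[simp]
theorem circleCurve_zero (b e f : E) : circleCurve b e f 0 = b + e := by
  simp [circleCurve]

theorem inner_circleCurve {a b e f : E} (he : ⟪a, e⟫ = 0) (hf : ⟪a, f⟫ = 0) (t : ℝ) :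
    ⟪a, circleCurve b e f t⟫ = ⟪a, b⟫ := by
  simp [circleCurve, inner_add_right, inner_smul_right, he, hf]

theorem norm_circleCurve {b e f : E} (hbe : ⟪b, e⟫ = 0) (hbf : ⟪b, f⟫ = 0) (hef : ⟪e, f⟫ = 0)
    (hnorm : ‖e‖ = ‖f‖) (t : ℝ) : ‖circleCurve b e f t‖ = ‖b + e‖ := by
  rw [← sq_eq_sq₀ (norm_nonneg _) (norm_nonneg _), ← real_inner_self_eq_norm_sq,
    ← real_inner_self_eq_norm_sq]
  have heb : ⟪e, b⟫ = 0 := by rwa [real_inner_comm]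
  have hfb : ⟪f, b⟫ = 0 := by rwa [real_inner_comm]
  have hfe : ⟪f, e⟫ = 0 := by rwa [real_inner_comm]
  simp only [circleCurve, inner_add_left, inner_add_right, real_inner_smul_left,
    real_inner_smul_right, hbe, hbf, hef, heb, hfb, hfe, real_inner_self_eq_norm_sq, hnorm,
    norm_smul, mul_pow, Real.norm_eq_abs, sq_abs]
  linear_combination ‖f‖ ^ 2 * Real.cos_sq_add_sin_sq t

theorem hasDerivAt_inner_circleCurve (b e f w : E) :
    HasDerivAt (fun t => ⟪w, circleCurve b e f t⟫) ⟪w, f⟫ 0 := by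
  have h := (((Real.hasDerivAt_cos 0).mul_const ⟪w, e⟫).add
    ((Real.hasDerivAt_sin 0).mul_const ⟪w, f⟫)).const_add ⟪w, b⟫
  have hfun : (fun t => ⟪w, circleCurve b e f t⟫) =
      fun t => ⟪w, b⟫ + (Real.cos t * ⟪w, e⟫ + Real.sin t * ⟪w, f⟫) := by
    ext t
    simp only [circleCurve, inner_add_right, real_inner_smul_right]
    ring
  rw [hfun]
  simpa using h

theorem exists_rotation_curve {a v w : E} (hv : v ∉ ℝ ∙ a) (hw : w ∉ Submodule.span ℝ {a, v}) :
    ∃ c : ℝ → E, Continuous c ∧ c 0 = v ∧ (∀ t, ‖c t‖ = ‖v‖) ∧ (∀ t, ⟪a, c t⟫ = ⟪a, v⟫) ∧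
      ∀ᶠ t in 𝓝[≠] 0, ⟪w, c t⟫ ≠ ⟪w, v⟫ := by
  set K := Submodule.span ℝ {a, v}
  have : FiniteDimensional ℝ K := FiniteDimensional.span_of_finite ℝ (Set.toFinite _)
  set b := (ℝ ∙ a).starProjection v
  set e := v - b
  have hbe : b + e = v := add_sub_cancel b v
  have hb : b ∈ ℝ ∙ a := (ℝ ∙ a).starProjection_apply_mem v
  have he : e ∈ (ℝ ∙ a)ᗮ := (ℝ ∙ a).sub_starProjection_mem_orthogonal v
  have he0 : e ≠ 0 := fun h => hv (sub_eq_zero.1 h ▸ hb)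
  have haK : ℝ ∙ a ≤ K := Submodule.span_mono (by simp)
  have hvK : v ∈ K := Submodule.subset_span (by simp)
  obtain ⟨f₀, hf₀, hwf₀⟩ := exists_mem_orthogonal_inner_ne hw
  have hf₀0 : f₀ ≠ 0 := by rintro rfl; simp at hwf₀
  set f := (‖e‖ / ‖f₀‖) • f₀
  have hf : f ∈ Kᗮ := Kᗮ.smul_mem _ hf₀
  have hae : ⟪a, e⟫ = 0 :=
    (ℝ ∙ a).inner_right_of_mem_orthogonal (Submodule.mem_span_singleton_self a) he
  have haf : ⟪a, f⟫ = 0 :=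
    K.inner_right_of_mem_orthogonal (haK (Submodule.mem_span_singleton_self a)) hf
  refine ⟨circleCurve b e f, continuous_circleCurve b e f, by rw [circleCurve_zero, hbe],
    fun t => ?_, fun t => ?_, ?_⟩
  · rw [← hbe]
    refine norm_circleCurve ((ℝ ∙ a).inner_right_of_mem_orthogonal hb he)
      (K.inner_right_of_mem_orthogonal (haK hb) hf)
      (K.inner_right_of_mem_orthogonal (K.sub_mem hvK (haK hb)) hf) ?_ t
    rw [norm_smul, Real.norm_of_nonneg (by positivity),
      div_mul_cancel₀ _ (norm_ne_zero_iff.2 hf₀0)]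
  · rw [inner_circleCurve hae haf, ← hbe, inner_add_right, hae, add_zero]
  · refine (hasDerivAt_inner_circleCurve b e f w).eventually_ne ?_
    rw [real_inner_smul_right]
    exact mul_ne_zero (div_ne_zero (norm_ne_zero_iff.2 he0) (norm_ne_zero_iff.2 hf₀0)) hwf₀

end InnerProductSpace

theorem exists_eventually_mem_of_continuousAt {X : Type*} [TopologicalSpace X] {U : Set X}
    {γ : ℝ → X} (hU : U ∈ 𝓝 (γ 0)) (hγ : ContinuousAt γ 0) {P : ℝ → Prop}
    (hP : ∀ᶠ t in 𝓝[≠] 0, P t) : ∃ t, γ t ∈ U ∧ P t :=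
  (Eventually.and (mem_nhdsWithin_of_mem_nhds (hγ.preimage_mem_nhds hU)) hP).exists

def IsIsolatingCurve {X ι : Type*} [TopologicalSpace X] (φ : X → ι → ℝ) (i : ι) (γ : ℝ → X) :
    Prop :=
  Continuous γ ∧ (∀ t, ∀ j ≠ i, φ (γ t) j = φ (γ 0) j) ∧ ∀ᶠ t in 𝓝[≠] 0, φ (γ t) i ≠ φ (γ 0) i

theorem IsIsolatingCurve.not_exists_function {X ι : Type*} [TopologicalSpace X]
    {φ : X → ι → ℝ} {i : ι} {γ : ℝ → X} (hγ : IsIsolatingCurve φ i γ) {U : Set X}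
    (hU : IsOpen U) (h0 : γ 0 ∈ U) :
    ¬ ∃ h : ({j : ι // j ≠ i} → ℝ) → ℝ, ∀ p ∈ U, φ p i = h (fun j => φ p j.val) := by
  rintro ⟨h, hh⟩
  obtain ⟨hcont, hfix, hmove⟩ := hγ
  obtain ⟨t, htU, ht⟩ :=
    exists_eventually_mem_of_continuousAt (hU.mem_nhds h0) hcont.continuousAt hmove
  refine ht ?_
  rw [hh _ htU, hh _ h0]
  congr 1
  funext j
  exact hfix t j j.2

local notation "E3" => EuclideanSpace ℝ (Fin 3)

theorem exists_norm_eq_one_mem_orthogonal_span_pair (a b : E3) :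
    ∃ f ∈ (Submodule.span ℝ {a, b})ᗮ, ‖f‖ = 1 := by
  have h := finrank_range_le_card (R := ℝ) ![a, b]
  rw [Matrix.range_cons_cons_empty] at h
  obtain ⟨f, hf, hf0⟩ := exists_ne_zero_mem_orthogonal_of_finrank_lt (h.trans_lt (by simp))
  exact ⟨‖f‖⁻¹ • f, Submodule.smul_mem _ _ hf, norm_smul_inv_norm hf0⟩

def IsGeneric (p : M3 × M3) : Prop :=
  LinearIndependent ℝ ![p.2.1.1 - p.1.1.1, p.1.1.2, p.2.1.2]

theorem exists_mem_linearIndependent_directions {U : Set (M3 × M3)} (hU : IsOpen U)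
    {p : M3 × M3} (hp : p ∈ U) : ∃ q ∈ U, LinearIndependent ℝ ![q.1.1.2, q.2.1.2] := by
  obtain ⟨⟨⟨x₁, n₁⟩, h₁⟩, ⟨⟨x₂, n₂⟩, h₂⟩⟩ := p
  obtain ⟨u, hu, hu1⟩ := exists_norm_eq_one_mem_orthogonal_span_pair n₁ n₂
  have hn₂u : ⟪n₂, u⟫ = 0 :=
    Submodule.inner_right_of_mem_orthogonal (Submodule.subset_span (by simp)) hu
  have hun₁ : ⟪u, n₁⟫ = 0 :=
    Submodule.inner_left_of_mem_orthogonal (Submodule.subset_span (by simp)) hu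
  have hc : ∀ t, ‖circleCurve 0 n₂ u t‖ = 1 := fun t => by
    rw [norm_circleCurve (inner_zero_left _) (inner_zero_left _) hn₂u (h₂.trans hu1.symm),
      zero_add]
    exact h₂
  let γ : ℝ → M3 × M3 := fun t => (⟨(x₁, n₁), h₁⟩, ⟨(x₂, circleCurve 0 n₂ u t), hc t⟩)
  have hγ : Continuous γ := by dsimp only [γ]; fun_prop
  obtain ⟨t, htU, ht⟩ := exists_eventually_mem_of_continuousAt (U := U) (γ := γ)
    (hU.mem_nhds (by simpa [γ] using hp)) hγ.continuousAt
    ((hasDerivAt_inner_circleCurve 0 n₂ u u).eventually_ne (c := 0) (by simp [hu1]))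
  refine ⟨γ t, htU, (LinearIndependent.pair_iff' (by rintro rfl; simp at h₁)).2 fun r hr => ?_⟩
  apply ht
  rw [show circleCurve 0 n₂ u t = r • n₁ from hr.symm, real_inner_smul_right, hun₁, mul_zero]

theorem exists_isGeneric_mem_of_linearIndependent {U : Set (M3 × M3)} (hU : IsOpen U)
    {p : M3 × M3} (hp : p ∈ U) (hn : LinearIndependent ℝ ![p.1.1.2, p.2.1.2]) :
    ∃ q ∈ U, IsGeneric q := by
  obtain ⟨⟨⟨x₁, n₁⟩, h₁⟩, ⟨⟨x₂, n₂⟩, h₂⟩⟩ := p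
  obtain ⟨f, hf, hf1⟩ := exists_norm_eq_one_mem_orthogonal_span_pair n₁ n₂
  let γ : ℝ → M3 × M3 := fun t => (⟨(x₁, n₁), h₁⟩, ⟨(x₂ + t • f, n₂), h₂⟩)
  have hγ : Continuous γ := by dsimp only [γ]; fun_prop
  have hderiv : HasDerivAt (fun t : ℝ => ⟪f, x₂ + t • f - x₁⟫) ⟪f, f⟫ 0 := by
    simpa using (hasDerivAt_const (0 : ℝ) f).inner ℝ
      ((((hasDerivAt_id (0 : ℝ)).smul_const f).const_add x₂).sub_const x₁)
  obtain ⟨t, htU, ht⟩ := exists_eventually_mem_of_continuousAt (U := U) (γ := γ)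
    (hU.mem_nhds (by simpa [γ] using hp)) hγ.continuousAt
    (hderiv.eventually_ne (c := 0) (by simp [hf1]))
  refine ⟨γ t, htU, linearIndependent_finCons.2 ⟨hn, fun hmem => ht ?_⟩⟩
  rw [Matrix.range_cons_cons_empty] at hmem
  exact Submodule.inner_left_of_mem_orthogonal hmem hf

theorem exists_isGeneric_mem {U : Set (M3 × M3)} (hU : IsOpen U) (hne : U.Nonempty) :
    ∃ p ∈ U, IsGeneric p := by
  obtain ⟨p, hp⟩ := hne
  obtain ⟨q, hq, hn⟩ := exists_mem_linearIndependent_directions hU hp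
  exact exists_isGeneric_mem_of_linearIndependent hU hq hn

theorem exists_isIsolatingCurve_iota_zero {p : M3 × M3} (hp : IsGeneric p) :
    ∃ γ, γ 0 = p ∧ IsIsolatingCurve iota 0 γ := by
  obtain ⟨⟨⟨x₁, n₁⟩, h₁⟩, ⟨⟨x₂, n₂⟩, h₂⟩⟩ := p
  obtain ⟨c, hc, rfl, hnorm, hfix, hmove⟩ :=
    exists_rotation_curve (a := n₂) (v := n₁) (w := x₂ - x₁)
      (hp.notMem_span_singleton_of_ne (i := 2) (j := 1) (by decide))
      (hp.notMem_span_pair_of_ne (i := 2) (j := 1) (k := 0) (by decide) (by decide))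
  refine ⟨fun t => (⟨(x₁, c t), (hnorm t).trans h₁⟩, ⟨(x₂, n₂), h₂⟩), rfl, by fun_prop, ?_, ?_⟩
  · intro t j hj
    fin_cases j <;> simp [iota, real_inner_comm n₂, hfix] at hj ⊢
  · simpa [iota] using hmove

theorem exists_isIsolatingCurve_iota_one {p : M3 × M3} (hp : IsGeneric p) :
    ∃ γ, γ 0 = p ∧ IsIsolatingCurve iota 1 γ := by
  obtain ⟨⟨⟨x₁, n₁⟩, h₁⟩, ⟨⟨x₂, n₂⟩, h₂⟩⟩ := p
  obtain ⟨c, hc, rfl, hnorm, hfix, hmove⟩ :=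
    exists_rotation_curve (a := n₁) (v := n₂) (w := x₂ - x₁)
      (hp.notMem_span_singleton_of_ne (i := 1) (j := 2) (by decide))
      (hp.notMem_span_pair_of_ne (i := 1) (j := 2) (k := 0) (by decide) (by decide))
  refine ⟨fun t => (⟨(x₁, n₁), h₁⟩, ⟨(x₂, c t), (hnorm t).trans h₂⟩), rfl, by fun_prop, ?_, ?_⟩
  · intro t j hj
    fin_cases j <;> simp [iota, hfix] at hj ⊢
  · simpa [iota] using hmove

theorem exists_isIsolatingCurve_iota_two {p : M3 × M3} (hp : IsGeneric p) :
    ∃ γ, γ 0 = p ∧ IsIsolatingCurve iota 2 γ := by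
  obtain ⟨⟨⟨x₁, n₁⟩, h₁⟩, ⟨⟨x₂, n₂⟩, h₂⟩⟩ := p
  obtain ⟨f, hf, hdf⟩ := exists_mem_orthogonal_inner_ne
    (hp.notMem_span_pair_of_ne (i := 1) (j := 2) (k := 0) (by decide) (by decide))
  have hfn₁ : ⟪f, n₁⟫ = 0 :=
    Submodule.inner_left_of_mem_orthogonal (Submodule.subset_span (by simp)) hf
  have hfn₂ : ⟪f, n₂⟫ = 0 :=
    Submodule.inner_left_of_mem_orthogonal (Submodule.subset_span (by simp)) hf
  have hderiv : HasDerivAt (fun t : ℝ => ⟪x₂ + t • f - x₁, x₂ + t • f - x₁⟫)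
      (2 * ⟪x₂ - x₁, f⟫) 0 := by
    have h := (((hasDerivAt_id (0 : ℝ)).smul_const f).const_add x₂).sub_const x₁
    simpa [real_inner_comm f, two_mul] using h.inner ℝ h
  refine ⟨fun t => (⟨(x₁, n₁), h₁⟩, ⟨(x₂ + t • f, n₂), h₂⟩), by simp, by fun_prop, ?_, ?_⟩
  · intro t j hj
    fin_cases j <;> simp [iota, add_sub_right_comm _ _ x₁, inner_add_left, real_inner_smul_left,
      hfn₁, hfn₂] at hj ⊢
  · exact hderiv.eventually_ne (c := ⟪x₂ + (0 : ℝ) • f - x₁, x₂ + (0 : ℝ) • f - x₁⟫)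
      (by simpa using hdf)

theorem exists_isIsolatingCurve_iota_three {p : M3 × M3} (hp : IsGeneric p) :
    ∃ γ, γ 0 = p ∧ IsIsolatingCurve iota 3 γ := by
  obtain ⟨⟨⟨x₁, n₁⟩, h₁⟩, ⟨⟨x₂, n₂⟩, h₂⟩⟩ := p
  obtain ⟨c, hc, rfl, hnorm, hfix, hmove⟩ :=
    exists_rotation_curve (a := x₂ - x₁) (v := n₂) (w := n₁)
      (hp.notMem_span_singleton_of_ne (i := 0) (j := 2) (by decide))
      (hp.notMem_span_pair_of_ne (i := 0) (j := 2) (k := 1) (by decide) (by decide))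
  refine ⟨fun t => (⟨(x₁, n₁), h₁⟩, ⟨(x₂, c t), (hnorm t).trans h₂⟩), rfl, by fun_prop, ?_, ?_⟩
  · intro t j hj
    fin_cases j <;> simp [iota, hfix] at hj ⊢
  · simpa [iota] using hmove

theorem exists_isIsolatingCurve_iota {p : M3 × M3} (hp : IsGeneric p) (i : Fin 4) :
    ∃ γ, γ 0 = p ∧ IsIsolatingCurve iota i γ := by
  fin_cases i
  exacts [exists_isIsolatingCurve_iota_zero hp, exists_isIsolatingCurve_iota_one hp,
    exists_isIsolatingCurve_iota_two hp, exists_isIsolatingCurve_iota_three hp]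

/-- The collection `(ι₁, ι₂, ι₃, ι₄)` is everywhere independent on `M₃ × M₃`: on no
nonempty open subset can one of the invariants be written as a function of the
remaining three. -/
theorem invariants_everywhere_independent
    (U : Set (M3 × M3)) (hU : IsOpen U) (hne : U.Nonempty) (i : Fin 4) :
    ¬ ∃ h : ({j : Fin 4 // j ≠ i} → ℝ) → ℝ,
      ∀ p ∈ U, iota p i = h (fun j => iota p j.val) := by
  obtain ⟨p, hpU, hp⟩ := exists_isGeneric_mem hU hne
  obtain ⟨γ, rfl, hγ⟩ := exists_isIsolatingCurve_iota hp i
  exact hγ.not_exists_function hU hpU
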